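/- arXiv:1901.11174 — 2 statements merged into one kernel-verified Lean document; each statement's English description precedes it below -/
import Mathlib

section
/- Suppose V : ℝⁿ × ℝ → ℝ satisfies V(x,0) ≤ 1 for all x ∈ X₀, and ∂V/∂t(x,t) + ∇ₓV(x,t)ᵀ f(x,u,w) ≤ wᵀw for all x ∈ X_c, t ∈ [0,T], u ∈ Y, w ∈ ℝ^{m_w}, where X_c contains FR(X₀,f,t,Y,γ) for all t ∈ [0,T]. Then FR(X₀, f, T, Y, γ) ⊆ { x ∈ ℝⁿ : V(x,T) ≤ 1 + γ }. -/
open Set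

/-! Along any admissible trajectory the dissipation inequality bounds the growth of `V` by the
supplied energy `wᵀw`, so integrating from `0` to `T` gives
`V(x(T), T) ≤ V(x₀, 0) + ∫₀ᵀ wᵀw < 1 + γ`. -/

theorem sub_le_integral_of_hasDerivAt_of_le {g g' h : ℝ → ℝ} {a b : ℝ} (hab : a ≤ b)
    (hderiv : ∀ t ∈ Icc a b, HasDerivAt g (g' t) t) (hle : ∀ t ∈ Ioo a b, g' t ≤ h t)
    (hint : IntervalIntegrable h MeasureTheory.volume a b) :
    g b - g a ≤ ∫ t in a..b, h t :=
  intervalIntegral.sub_le_integral_of_hasDeriv_right_of_le hab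
    (fun t ht => (hderiv t ht).continuousAt.continuousWithinAt)
    (fun t ht => (hderiv t (Ioo_subset_Icc_self ht)).hasDerivWithinAt)
    ((intervalIntegrable_iff_integrableOn_Icc_of_le hab).mp hint)
    hle

theorem reachable_subset_sublevel_general
    {n m_u m_w : ℕ}
    (f : (Fin n → ℝ) → (Fin m_u → ℝ) → (Fin m_w → ℝ) → (Fin n → ℝ))
    (φ : (Fin n → ℝ) → (ℝ → Fin m_u → ℝ) → (ℝ → Fin m_w → ℝ) → ℝ → (Fin n → ℝ))
    (T : ℝ) (hT : 0 < T) (Y : Set (Fin m_u → ℝ)) (γ : ℝ)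
    (X₀ Xc : Set (Fin n → ℝ))
    (UY : Set (ℝ → Fin m_u → ℝ))
    (hUY : UY = {u | ∀ t ∈ Icc (0:ℝ) T, u t ∈ Y})
    (Wγ : Set (ℝ → Fin m_w → ℝ))
    (hWγ : Wγ = {w | IntervalIntegrable (fun t => ∑ i, (w t i)^2) MeasureTheory.volume 0 T ∧
      (∫ t in (0:ℝ)..T, ∑ i, (w t i)^2) < γ})
    (FR : ℝ → Set (Fin n → ℝ))
    (hFR : ∀ t, FR t = {y | ∃ x ∈ X₀, ∃ u ∈ UY, ∃ w ∈ Wγ, φ x u w t = y})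
    -- solution map: initial condition
    (hφ0 : ∀ x u w, φ x u w 0 = x)
    -- V together with its partial derivatives ∂V/∂t and ∇ₓV
    (V : (Fin n → ℝ) → ℝ → ℝ) (Vt : (Fin n → ℝ) → ℝ → ℝ)
    (Vgrad : (Fin n → ℝ) → ℝ → (Fin n → ℝ))
    -- chain rule along trajectories
    (hchain : ∀ x₀ ∈ X₀, ∀ u ∈ UY, ∀ w ∈ Wγ, ∀ t ∈ Icc (0:ℝ) T,
      HasDerivAt (fun s => V (φ x₀ u w s) s)
        (Vt (φ x₀ u w t) t +
          ∑ i, Vgrad (φ x₀ u w t) t i * f (φ x₀ u w t) (u t) (w t) i) t)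
    -- inequality (2): V(x,0) ≤ 1 on X₀
    (hV0 : ∀ x ∈ X₀, V x 0 ≤ 1)
    -- inequality (3): dissipation inequality on Xc
    (hdiss : ∀ x ∈ Xc, ∀ t ∈ Icc (0:ℝ) T, ∀ u ∈ Y, ∀ w : Fin m_w → ℝ,
      Vt x t + ∑ i, Vgrad x t i * f x u w i ≤ ∑ i, (w i)^2)
    -- Xc contains the reachable sets at all intermediate times
    (hXc : ∀ t ∈ Icc (0:ℝ) T, FR t ⊆ Xc) :
    FR T ⊆ {x : Fin n → ℝ | V x T ≤ 1 + γ} := by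
  intro y hy
  rw [hFR] at hy
  obtain ⟨x₀, hx₀, u, hu, w, hw, rfl⟩ := hy
  have hstays : ∀ t ∈ Icc (0:ℝ) T, φ x₀ u w t ∈ Xc := fun t ht =>
    hXc t ht (by rw [hFR]; exact ⟨x₀, hx₀, u, hu, w, hw, rfl⟩)
  have hsupply := hw
  rw [hWγ] at hsupply
  have hrate : ∀ t ∈ Ioo (0:ℝ) T, Vt (φ x₀ u w t) t +
      ∑ i, Vgrad (φ x₀ u w t) t i * f (φ x₀ u w t) (u t) (w t) i ≤ ∑ i, (w t i)^2 := by
    intro t ht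
    have htI := Ioo_subset_Icc_self ht
    rw [hUY] at hu
    exact hdiss _ (hstays t htI) t htI _ (hu t htI) (w t)
  have henergy := sub_le_integral_of_hasDerivAt_of_le hT.le (hchain x₀ hx₀ u hu w hw) hrate
    hsupply.1
  rw [hφ0] at henergy
  show V (φ x₀ u w T) T ≤ 1 + γ
  linarith [hV0 x₀ hx₀, hsupply.2]

/-- If `V(x,0) ≤ 1` on `X₀` and the dissipation inequality
`∂V/∂t + ∇ₓV ⬝ f ≤ wᵀw` holds on a set `X_c` containing all the reachable sets,
then the forward reachable set at time `T` is contained in `{x | V(x,T) ≤ 1 + γ}`. -/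
theorem reachable_subset_sublevel
    {n m_u m_w : ℕ}
    (f : (Fin n → ℝ) → (Fin m_u → ℝ) → (Fin m_w → ℝ) → (Fin n → ℝ))
    (φ : (Fin n → ℝ) → (ℝ → Fin m_u → ℝ) → (ℝ → Fin m_w → ℝ) → ℝ → (Fin n → ℝ))
    (T : ℝ) (hT : 0 < T) (Y : Set (Fin m_u → ℝ)) (γ : ℝ) (hγ : 0 ≤ γ)
    (X₀ Xc : Set (Fin n → ℝ))
    (UY : Set (ℝ → Fin m_u → ℝ))
    (hUY : UY = {u | ∀ t ∈ Icc (0:ℝ) T, u t ∈ Y})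
    (Wγ : Set (ℝ → Fin m_w → ℝ))
    (hWγ : Wγ = {w | IntervalIntegrable (fun t => ∑ i, (w t i)^2) MeasureTheory.volume 0 T ∧
      (∫ t in (0:ℝ)..T, ∑ i, (w t i)^2) < γ})
    (FR : ℝ → Set (Fin n → ℝ))
    (hFR : ∀ t, FR t = {y | ∃ x ∈ X₀, ∃ u ∈ UY, ∃ w ∈ Wγ, φ x u w t = y})
    -- solution map: initial condition
    (hφ0 : ∀ x u w, φ x u w 0 = x)
    -- V together with its partial derivatives ∂V/∂t and ∇ₓV
    (V : (Fin n → ℝ) → ℝ → ℝ) (Vt : (Fin n → ℝ) → ℝ → ℝ)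
    (Vgrad : (Fin n → ℝ) → ℝ → (Fin n → ℝ))
    -- chain rule along trajectories
    (hchain : ∀ x₀ ∈ X₀, ∀ u ∈ UY, ∀ w ∈ Wγ, ∀ t ∈ Icc (0:ℝ) T,
      HasDerivAt (fun s => V (φ x₀ u w s) s)
        (Vt (φ x₀ u w t) t +
          ∑ i, Vgrad (φ x₀ u w t) t i * f (φ x₀ u w t) (u t) (w t) i) t)
    -- inequality (2): V(x,0) ≤ 1 on X₀
    (hV0 : ∀ x ∈ X₀, V x 0 ≤ 1)
    -- inequality (3): dissipation inequality on Xc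
    (hdiss : ∀ x ∈ Xc, ∀ t ∈ Icc (0:ℝ) T, ∀ u ∈ Y, ∀ w : Fin m_w → ℝ,
      Vt x t + ∑ i, Vgrad x t i * f x u w i ≤ ∑ i, (w i)^2)
    -- Xc contains the reachable sets at all intermediate times
    (hXc : ∀ t ∈ Icc (0:ℝ) T, FR t ⊆ Xc) :
    FR T ⊆ {x : Fin n → ℝ | V x T ≤ 1 + γ} :=
  reachable_subset_sublevel_general f φ T hT Y γ X₀ Xc UY hUY Wγ hWγ FR hFR hφ0 V Vt Vgrad hchain
    hV0 hdiss hXc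
end

section
/- Suppose g_X, g_C, g_U are polynomials with X₀ ⊆ {x : g_X(x) ≥ 0}, Y ⊆ {u : g_U(u) ≥ 0}, and FR(X₀,f,t,Y,γ) ⊆ {x : g_C(x) ≥ 0} for all t ∈ [0,T]. If V(x,t) = z_d(x)ᵀP(t)z_d(x) is a polynomial such that (1 − V(x,0)) − s₁(x)g_X(x) is SOS for some SOS s₁, and −(∂V/∂t + ∇ₓVᵀ f(x,u,w) − wᵀw) − s₂ g_C(x) − s₃ t(T−t) − s₄ g_U(u) is SOS for some SOS multipliers s₂,s₃,s₄, then FR(X₀,f,T,Y,γ) ⊆ { x : z_d(x)ᵀP(T)z_d(x) ≤ 1 + γ }. -/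
/-!
`V` acts as a storage function for the supply rate `wᵀw`. On the constraint set the
multipliers `s₂, s₃, s₄` and the constraints `g_C, t(T - t), g_U` are nonnegative, so the
dissipation certificate gives `d/dt V(x(t), t) ≤ w(t)ᵀw(t)` along every admissible trajectory.
Integrating over `[0, T]` yields `V(x(T), T) ≤ V(x₀, 0) + ∫ wᵀw < V(x₀, 0) + γ`, and the initial
certificate gives `V(x₀, 0) ≤ 1` on `X₀`.
-/

open Set Matrix

/-- A real-valued function on `α` is a (pointwise) sum of squares of functions
(in the application, the `q i` are polynomials). -/
def IsSOSFun {α : Type*} (g : α → ℝ) : Prop :=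
  ∃ (k : ℕ) (q : Fin k → α → ℝ), ∀ a, g a = ∑ i, (q i a) ^ 2

open MeasureTheory

namespace IsSOSFun

variable {α : Type*}

theorem nonneg {g : α → ℝ} (hg : IsSOSFun g) (a : α) : 0 ≤ g a := by
  obtain ⟨k, q, hq⟩ := hg
  rw [hq a]
  exact Finset.sum_nonneg fun i _ => sq_nonneg _

theorem le_of_sub_mul {v s g : α → ℝ} {c : ℝ} (h : IsSOSFun fun a => (c - v a) - s a * g a)
    (hs : IsSOSFun s) {a : α} (ha : 0 ≤ g a) : v a ≤ c := by
  have := h.nonneg a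
  have := mul_nonneg (hs.nonneg a) ha
  linarith

theorem nonneg_of_sub_mul_sub_mul_sub_mul {h s₁ s₂ s₃ g₁ g₂ g₃ : α → ℝ}
    (H : IsSOSFun fun a => h a - s₁ a * g₁ a - s₂ a * g₂ a - s₃ a * g₃ a)
    (hs₁ : IsSOSFun s₁) (hs₂ : IsSOSFun s₂) (hs₃ : IsSOSFun s₃) {a : α}
    (hg₁ : 0 ≤ g₁ a) (hg₂ : 0 ≤ g₂ a) (hg₃ : 0 ≤ g₃ a) : 0 ≤ h a := by
  have := H.nonneg a
  have := mul_nonneg (hs₁.nonneg a) hg₁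
  have := mul_nonneg (hs₂.nonneg a) hg₂
  have := mul_nonneg (hs₃.nonneg a) hg₃
  linarith

end IsSOSFun

theorem sub_le_integral_of_hasDerivAt_of_le_s6 {F F' g : ℝ → ℝ} {T : ℝ} (hT : 0 ≤ T)
    (hF : ∀ t ∈ Icc 0 T, HasDerivAt F (F' t) t) (hle : ∀ t ∈ Ioo 0 T, F' t ≤ g t)
    (hg : IntervalIntegrable g volume 0 T) : F T - F 0 ≤ ∫ t in 0..T, g t :=
  intervalIntegral.sub_le_integral_of_hasDeriv_right_of_le hT
    (fun t ht => (hF t ht).continuousAt.continuousWithinAt)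
    (fun t ht => (hF t (Ioo_subset_Icc_self ht)).hasDerivWithinAt)
    ((intervalIntegrable_iff_integrableOn_Icc_of_le hT).1 hg) hle

theorem sos_outer_approximation_reachable_general
    {n m_u m_w N : ℕ}
    (f : (Fin n → ℝ) → (Fin m_u → ℝ) → (Fin m_w → ℝ) → (Fin n → ℝ))
    (φ : (Fin n → ℝ) → (ℝ → Fin m_u → ℝ) → (ℝ → Fin m_w → ℝ) → ℝ → (Fin n → ℝ))
    (T : ℝ) (hT : 0 < T) (Y : Set (Fin m_u → ℝ)) (γ : ℝ)
    (X₀ : Set (Fin n → ℝ))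
    (UY : Set (ℝ → Fin m_u → ℝ))
    (hUY : UY = {u | ∀ t ∈ Icc (0:ℝ) T, u t ∈ Y})
    (Wγ : Set (ℝ → Fin m_w → ℝ))
    (hWγ : Wγ = {w | IntervalIntegrable (fun t => ∑ i, (w t i)^2) MeasureTheory.volume 0 T ∧
      (∫ t in (0:ℝ)..T, ∑ i, (w t i)^2) < γ})
    (FR : ℝ → Set (Fin n → ℝ))
    (hFR : ∀ t, FR t = {y | ∃ x ∈ X₀, ∃ u ∈ UY, ∃ w ∈ Wγ, φ x u w t = y})
    (hφ0 : ∀ x u w, φ x u w 0 = x)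
    -- the monomial vector, the matrix-valued function, and V
    (zd : (Fin n → ℝ) → (Fin N → ℝ)) (P : ℝ → Matrix (Fin N) (Fin N) ℝ)
    (V : (Fin n → ℝ) → ℝ → ℝ)
    (hVdef : ∀ x t, V x t = zd x ⬝ᵥ (P t).mulVec (zd x))
    -- partial derivatives of V and the chain rule along trajectories
    (Vt : (Fin n → ℝ) → ℝ → ℝ) (Vgrad : (Fin n → ℝ) → ℝ → (Fin n → ℝ))
    (hchain : ∀ x₀ ∈ X₀, ∀ u ∈ UY, ∀ w ∈ Wγ, ∀ t ∈ Icc (0:ℝ) T,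
      HasDerivAt (fun s => V (φ x₀ u w s) s)
        (Vt (φ x₀ u w t) t +
          ∑ i, Vgrad (φ x₀ u w t) t i * f (φ x₀ u w t) (u t) (w t) i) t)
    -- semialgebraic descriptions
    (gX gC : (Fin n → ℝ) → ℝ) (gU : (Fin m_u → ℝ) → ℝ)
    (hX₀ : X₀ ⊆ {x | 0 ≤ gX x})
    (hY : Y ⊆ {u | 0 ≤ gU u})
    (hC : ∀ t ∈ Icc (0:ℝ) T, FR t ⊆ {x | 0 ≤ gC x})
    -- SOS certificate for the initial condition
    (s₁ : (Fin n → ℝ) → ℝ)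
    (hk₁ : IsSOSFun (fun x : Fin n → ℝ => (1 - V x 0) - s₁ x * gX x))
    (hs₁ : IsSOSFun s₁)
    -- SOS certificate for the dissipation inequality
    (s₂ s₃ s₄ : (Fin n → ℝ) → (Fin m_u → ℝ) → (Fin m_w → ℝ) → ℝ → ℝ)
    (hk₂ : IsSOSFun (fun p : (Fin n → ℝ) × (Fin m_u → ℝ) × (Fin m_w → ℝ) × ℝ =>
      -(Vt p.1 p.2.2.2 + (∑ i, Vgrad p.1 p.2.2.2 i * f p.1 p.2.1 p.2.2.1 i)
          - ∑ i, (p.2.2.1 i)^2)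
        - s₂ p.1 p.2.1 p.2.2.1 p.2.2.2 * gC p.1
        - s₃ p.1 p.2.1 p.2.2.1 p.2.2.2 * (p.2.2.2 * (T - p.2.2.2))
        - s₄ p.1 p.2.1 p.2.2.1 p.2.2.2 * gU p.2.1))
    (hs₂ : IsSOSFun (fun p : (Fin n → ℝ) × (Fin m_u → ℝ) × (Fin m_w → ℝ) × ℝ =>
      s₂ p.1 p.2.1 p.2.2.1 p.2.2.2))
    (hs₃ : IsSOSFun (fun p : (Fin n → ℝ) × (Fin m_u → ℝ) × (Fin m_w → ℝ) × ℝ =>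
      s₃ p.1 p.2.1 p.2.2.1 p.2.2.2))
    (hs₄ : IsSOSFun (fun p : (Fin n → ℝ) × (Fin m_u → ℝ) × (Fin m_w → ℝ) × ℝ =>
      s₄ p.1 p.2.1 p.2.2.1 p.2.2.2)) :
    FR T ⊆ {x : Fin n → ℝ | zd x ⬝ᵥ (P T).mulVec (zd x) ≤ 1 + γ} := by
  rintro _ hy
  rw [hFR T] at hy
  obtain ⟨x₀, hx₀, u, hu, w, hw, rfl⟩ := hy
  have hV₀ : V (φ x₀ u w 0) 0 ≤ 1 := by
    rw [hφ0]
    exact hk₁.le_of_sub_mul (v := fun x => V x 0) hs₁ (hX₀ hx₀)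
  have hdissipation : ∀ t ∈ Ioo 0 T, Vt (φ x₀ u w t) t +
      ∑ i, Vgrad (φ x₀ u w t) t i * f (φ x₀ u w t) (u t) (w t) i ≤ ∑ i, (w t i) ^ 2 := by
    intro t ht
    have htIcc := Ioo_subset_Icc_self ht
    have hmem : φ x₀ u w t ∈ FR t := by rw [hFR t]; exact ⟨x₀, hx₀, u, hu, w, hw, rfl⟩
    have hut : u t ∈ Y := by rw [hUY] at hu; exact hu t htIcc
    have := hk₂.nonneg_of_sub_mul_sub_mul_sub_mul hs₂ hs₃ hs₄ (a := (φ x₀ u w t, u t, w t, t))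
      (hC t htIcc hmem) (mul_nonneg ht.1.le (sub_nonneg.2 ht.2.le)) (hY hut)
    linarith
  obtain ⟨hw_int, hw_lt⟩ := hWγ ▸ hw
  have hstorage := sub_le_integral_of_hasDerivAt_of_le_s6 hT.le
    (hchain x₀ hx₀ u hu w hw) hdissipation hw_int
  change zd _ ⬝ᵥ (P T).mulVec (zd _) ≤ 1 + γ
  rw [← hVdef]
  linarith

/-- Proposition 1: If `V(x,t) = z_d(x)ᵀ P(t) z_d(x)` satisfies the SOS
certificates for the initial-set and dissipation inequalities, with `X₀ ⊆ {g_X ≥ 0}`,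
`Y ⊆ {g_U ≥ 0}` and `FR(X₀,f,t,Y,γ) ⊆ {g_C ≥ 0}` for all `t ∈ [0,T]`, then
`FR(X₀,f,T,Y,γ) ⊆ {x | z_d(x)ᵀ P(T) z_d(x) ≤ 1 + γ}`. -/
theorem sos_outer_approximation_reachable
    {n m_u m_w N : ℕ}
    (f : (Fin n → ℝ) → (Fin m_u → ℝ) → (Fin m_w → ℝ) → (Fin n → ℝ))
    (φ : (Fin n → ℝ) → (ℝ → Fin m_u → ℝ) → (ℝ → Fin m_w → ℝ) → ℝ → (Fin n → ℝ))
    (T : ℝ) (hT : 0 < T) (Y : Set (Fin m_u → ℝ)) (γ : ℝ) (hγ : 0 ≤ γ)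
    (X₀ : Set (Fin n → ℝ))
    (UY : Set (ℝ → Fin m_u → ℝ))
    (hUY : UY = {u | ∀ t ∈ Icc (0:ℝ) T, u t ∈ Y})
    (Wγ : Set (ℝ → Fin m_w → ℝ))
    (hWγ : Wγ = {w | IntervalIntegrable (fun t => ∑ i, (w t i)^2) MeasureTheory.volume 0 T ∧
      (∫ t in (0:ℝ)..T, ∑ i, (w t i)^2) < γ})
    (FR : ℝ → Set (Fin n → ℝ))
    (hFR : ∀ t, FR t = {y | ∃ x ∈ X₀, ∃ u ∈ UY, ∃ w ∈ Wγ, φ x u w t = y})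
    (hφ0 : ∀ x u w, φ x u w 0 = x)
    -- the monomial vector, the matrix-valued function, and V
    (zd : (Fin n → ℝ) → (Fin N → ℝ)) (P : ℝ → Matrix (Fin N) (Fin N) ℝ)
    (V : (Fin n → ℝ) → ℝ → ℝ)
    (hVdef : ∀ x t, V x t = zd x ⬝ᵥ (P t).mulVec (zd x))
    -- partial derivatives of V and the chain rule along trajectories
    (Vt : (Fin n → ℝ) → ℝ → ℝ) (Vgrad : (Fin n → ℝ) → ℝ → (Fin n → ℝ))
    (hchain : ∀ x₀ ∈ X₀, ∀ u ∈ UY, ∀ w ∈ Wγ, ∀ t ∈ Icc (0:ℝ) T,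
      HasDerivAt (fun s => V (φ x₀ u w s) s)
        (Vt (φ x₀ u w t) t +
          ∑ i, Vgrad (φ x₀ u w t) t i * f (φ x₀ u w t) (u t) (w t) i) t)
    -- semialgebraic descriptions
    (gX gC : (Fin n → ℝ) → ℝ) (gU : (Fin m_u → ℝ) → ℝ)
    (hX₀ : X₀ ⊆ {x | 0 ≤ gX x})
    (hY : Y ⊆ {u | 0 ≤ gU u})
    (hC : ∀ t ∈ Icc (0:ℝ) T, FR t ⊆ {x | 0 ≤ gC x})
    -- SOS certificate for the initial condition
    (s₁ : (Fin n → ℝ) → ℝ)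
    (hk₁ : IsSOSFun (fun x : Fin n → ℝ => (1 - V x 0) - s₁ x * gX x))
    (hs₁ : IsSOSFun s₁)
    -- SOS certificate for the dissipation inequality
    (s₂ s₃ s₄ : (Fin n → ℝ) → (Fin m_u → ℝ) → (Fin m_w → ℝ) → ℝ → ℝ)
    (hk₂ : IsSOSFun (fun p : (Fin n → ℝ) × (Fin m_u → ℝ) × (Fin m_w → ℝ) × ℝ =>
      -(Vt p.1 p.2.2.2 + (∑ i, Vgrad p.1 p.2.2.2 i * f p.1 p.2.1 p.2.2.1 i)
          - ∑ i, (p.2.2.1 i)^2)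
        - s₂ p.1 p.2.1 p.2.2.1 p.2.2.2 * gC p.1
        - s₃ p.1 p.2.1 p.2.2.1 p.2.2.2 * (p.2.2.2 * (T - p.2.2.2))
        - s₄ p.1 p.2.1 p.2.2.1 p.2.2.2 * gU p.2.1))
    (hs₂ : IsSOSFun (fun p : (Fin n → ℝ) × (Fin m_u → ℝ) × (Fin m_w → ℝ) × ℝ =>
      s₂ p.1 p.2.1 p.2.2.1 p.2.2.2))
    (hs₃ : IsSOSFun (fun p : (Fin n → ℝ) × (Fin m_u → ℝ) × (Fin m_w → ℝ) × ℝ =>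
      s₃ p.1 p.2.1 p.2.2.1 p.2.2.2))
    (hs₄ : IsSOSFun (fun p : (Fin n → ℝ) × (Fin m_u → ℝ) × (Fin m_w → ℝ) × ℝ =>
      s₄ p.1 p.2.1 p.2.2.1 p.2.2.2)) :
    FR T ⊆ {x : Fin n → ℝ | zd x ⬝ᵥ (P T).mulVec (zd x) ≤ 1 + γ} :=
  sos_outer_approximation_reachable_general f φ T hT Y γ X₀ UY hUY Wγ hWγ FR hFR hφ0 zd P V hVdef Vt
    Vgrad hchain gX gC gU hX₀ hY hC s₁ hk₁ hs₁ s₂ s₃ s₄ hk₂ hs₂ hs₃ hs₄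
end
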